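/- arXiv:2002.02125 — 3 statements merged into one kernel-verified Lean document; each statement's English description precedes it below -/
import Mathlib

section
/- Let T₁,...,T_N be i.i.d. shifted exponential (rate λ, shift c), T_N(K) the K-th order statistic, T_D > c a deadline, and n a fixed index. Then P(T_n > T_D and T_n > T_N(K)) = (1/N) · Σ_{h=K+1}^{N} Z_h, where Z_h := P(T_D < T_N(h)). -/
open MeasureTheory ProbabilityTheory Real Finset Filter

/-- The `k`-th order statistic (1-based): the `k`-th smallest value of `f`. -/
noncomputable def ordStat {N : ℕ} (f : Fin N → ℝ) (k : ℕ) : ℝ :=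
  if h : k - 1 < N then f (Tuple.sort f ⟨k - 1, h⟩) else 0

open Topology
open scoped ENNReal

section AuxOrdStat

variable {N : ℕ}

lemma ordStat_le_iff (f : Fin N → ℝ) {h : ℕ} (h1 : 1 ≤ h) (hN : h ≤ N) (t : ℝ) :
    ordStat f h ≤ t ↔ h ≤ Fintype.card {i // f i ≤ t} := by
  classical
  have hlt : h - 1 < N := by omega
  rw [ordStat, dif_pos hlt]
  have key := Tuple.lt_card_le_iff_apply_le_of_monotone (f := f ∘ Tuple.sort f) (a := t)
    (j := ⟨h - 1, hlt⟩) (Tuple.monotone_sort f)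
  rw [← Fintype.card_subtype] at key
  have hcard : Fintype.card {i // (f ∘ Tuple.sort f) i ≤ t} = Fintype.card {i // f i ≤ t} :=
    Fintype.card_congr ((Tuple.sort f).subtypeEquiv (fun i => Iff.rfl))
  rw [hcard] at key
  constructor
  · intro hle
    have hlt' : ((⟨h - 1, hlt⟩ : Fin N) : ℕ) < Fintype.card {i // f i ≤ t} := key.mpr hle
    simp only [Fin.val_mk] at hlt'
    omega
  · intro hge
    exact key.mp (show ((⟨h - 1, hlt⟩ : Fin N) : ℕ) < _ by simp only [Fin.val_mk]; omega)

lemma measurableSet_ordStat_le {h : ℕ} (h1 : 1 ≤ h) (hN : h ≤ N) (t : ℝ) :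
    MeasurableSet {x : Fin N → ℝ | ordStat x h ≤ t} := by
  classical
  have hset : {x : Fin N → ℝ | ordStat x h ≤ t}
      = ⋃ s ∈ Finset.univ.powersetCard h, {x : Fin N → ℝ | ∀ i ∈ s, x i ≤ t} := by
    ext x
    simp only [Set.mem_setOf_eq, Set.mem_iUnion, Finset.mem_powersetCard, exists_prop]
    rw [ordStat_le_iff x h1 hN t, Fintype.card_subtype]
    constructor
    · intro hc
      obtain ⟨s, hs, hcard⟩ := Finset.exists_subset_card_eq hc
      exact ⟨s, ⟨Finset.subset_univ s, hcard⟩, fun i hi => (Finset.mem_filter.mp (hs hi)).2⟩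
    · rintro ⟨s, ⟨-, hcard⟩, hst⟩
      calc h = s.card := hcard.symm
        _ ≤ _ := Finset.card_le_card fun i hi =>
            Finset.mem_filter.mpr ⟨Finset.mem_univ i, hst i hi⟩
  rw [hset]
  refine MeasurableSet.biUnion (Finset.univ.powersetCard h).countable_toSet (fun s _ => ?_)
  have : {x : Fin N → ℝ | ∀ i ∈ s, x i ≤ t} = ⋂ i ∈ s, {x : Fin N → ℝ | x i ≤ t} := by
    ext x; simp
  rw [this]
  exact MeasurableSet.biInter s.countable_toSet fun i _ =>
    measurableSet_le (measurable_pi_apply i) measurable_const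

lemma measurable_ordStat {h : ℕ} (h1 : 1 ≤ h) (hN : h ≤ N) :
    Measurable fun x : Fin N → ℝ => ordStat x h :=
  measurable_of_Iic fun t => measurableSet_ordStat_le h1 hN t

lemma ordStat_comp_perm (f : Fin N → ℝ) (σ : Equiv.Perm (Fin N)) (k : ℕ) :
    ordStat (f ∘ σ) k = ordStat f k := by
  unfold ordStat
  split_ifs with hk
  · exact congrFun (Tuple.comp_perm_comp_sort_eq_comp_sort (σ := σ) (f := f)) ⟨k - 1, hk⟩
  · rfl

lemma ordStat_mono (f : Fin N → ℝ) {a b : ℕ} (ha : 1 ≤ a) (hab : a ≤ b) (hb : b ≤ N) :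
    ordStat f a ≤ ordStat f b := by
  have ha' : a - 1 < N := by omega
  have hb' : b - 1 < N := by omega
  rw [ordStat, dif_pos ha', ordStat, dif_pos hb']
  exact Tuple.monotone_sort f (Fin.mk_le_mk.mpr (by omega))

lemma ordStat_strict {f : Fin N → ℝ} (hf : Function.Injective f) {a b : ℕ}
    (ha : 1 ≤ a) (hab : a < b) (hb : b ≤ N) : ordStat f a < ordStat f b := by
  have ha' : a - 1 < N := by omega
  have hb' : b - 1 < N := by omega
  rw [ordStat, dif_pos ha', ordStat, dif_pos hb']
  have hinj : Function.Injective (f ∘ Tuple.sort f) := hf.comp (Tuple.sort f).injective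
  exact ((Tuple.monotone_sort f).strictMono_of_injective hinj) (Fin.mk_lt_mk.mpr (by omega))

lemma exists_ordStat_rank (f : Fin N → ℝ) (i : Fin N) :
    ∃ h, 1 ≤ h ∧ h ≤ N ∧ f i = ordStat f h := by
  set v := (Tuple.sort f).symm i with hv
  have hvlt : (v : ℕ) < N := v.isLt
  refine ⟨(v : ℕ) + 1, Nat.le_add_left _ _, by omega, ?_⟩
  have hlt : (v : ℕ) + 1 - 1 < N := by omega
  rw [ordStat, dif_pos hlt]
  have hfin : (⟨(v : ℕ) + 1 - 1, hlt⟩ : Fin N) = v := Fin.ext (by simp)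
  rw [hfin, hv, Equiv.apply_symm_apply]

lemma ordStat_mem_range (f : Fin N → ℝ) {h : ℕ} (h1 : 1 ≤ h) (hN : h ≤ N) :
    ∃ i, ordStat f h = f i := by
  have hlt : h - 1 < N := by omega
  exact ⟨Tuple.sort f ⟨h - 1, hlt⟩, by rw [ordStat, dif_pos hlt]⟩

/-- Auxiliary event: coordinate `m` exceeds `TD` and realizes the `h`-th order statistic. -/
def Eset (N : ℕ) (TD : ℝ) (h : ℕ) (m : Fin N) : Set (Fin N → ℝ) :=
  {x | TD < x m ∧ x m = ordStat x h}

lemma measurableSet_Eset (TD : ℝ) {h : ℕ} (h1 : 1 ≤ h) (hN : h ≤ N) (m : Fin N) :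
    MeasurableSet (Eset N TD h m) :=
  (measurableSet_lt measurable_const (measurable_pi_apply m)).inter
    ((measurable_pi_apply m).stronglyMeasurable.measurableSet_eq_fun
      (measurable_ordStat h1 hN).stronglyMeasurable)

end AuxOrdStat

theorem prob_exceed_deadline_and_orderStat {Ω : Type*} [MeasurableSpace Ω] (μ : Measure Ω)
    [IsProbabilityMeasure μ]
    (N K : ℕ) (hK1 : 1 ≤ K) (hKN : K < N)
    (lam c TD : ℝ) (hlam : 0 < lam) (hc : 0 < c) (hTD : c < TD)
    (T : Fin N → Ω → ℝ)
    (hCDF : ∀ i : Fin N, ∀ t : ℝ,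
      μ {ω | T i ω ≤ t} = ENNReal.ofReal (if t < c then 0 else 1 - Real.exp (-lam * (t - c))))
    (hmeas : ∀ i, Measurable (T i))
    (hindep : iIndepFun T μ)
    (n : Fin N)
    (Z : ℕ → ℝ) (hZ : ∀ h : ℕ, Z h = (μ {ω | TD < ordStat (fun i => T i ω) h}).toReal) :
    μ {ω | TD < T n ω ∧ ordStat (fun i => T i ω) K < T n ω} =
      ENNReal.ofReal ((1 / (N : ℝ)) * ∑ h ∈ Finset.Icc (K + 1) N, Z h) := by
  classical
  have hK' : K ≤ N := hKN.le
  -- the joint random vector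
  set X : Ω → (Fin N → ℝ) := fun ω i => T i ω with hXdef
  have hXm : Measurable X := measurable_pi_lambda _ hmeas
  set ν : Measure ℝ := μ.map (T n) with hνdef
  haveI : IsProbabilityMeasure ν := Measure.isProbabilityMeasure_map (hmeas n).aemeasurable
  -- the common CDF
  set F : ℝ → ℝ≥0∞ := fun t => ENNReal.ofReal (1 - Real.exp (-lam * (t - c))) with hFdef
  have hCDF' : ∀ (i : Fin N) (t : ℝ), μ {ω | T i ω ≤ t} = F t := by
    intro i t
    rw [hCDF i t]
    split_ifs with ht
    · have hexp : (1 : ℝ) ≤ Real.exp (-lam * (t - c)) := Real.one_le_exp (by nlinarith)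
      rw [hFdef]
      simp only [ENNReal.ofReal_zero]
      exact (ENNReal.ofReal_eq_zero.mpr (by linarith)).symm
    · rfl
  have hmap : ∀ i : Fin N, μ.map (T i) = ν := by
    intro i
    refine MeasureTheory.Measure.ext_of_Iic _ _ (fun t => ?_)
    rw [hνdef, Measure.map_apply (hmeas i) measurableSet_Iic,
      Measure.map_apply (hmeas n) measurableSet_Iic]
    show μ {ω | T i ω ≤ t} = μ {ω | T n ω ≤ t}
    rw [hCDF' i, hCDF' n]
  have hIic : ∀ t, ν (Set.Iic t) = F t := by
    intro t
    rw [hνdef, Measure.map_apply (hmeas n) measurableSet_Iic]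
    exact hCDF' n t
  have hFc : Continuous F := ENNReal.continuous_ofReal.comp (by continuity)
  have hFne : ∀ t, F t ≠ ⊤ := fun t => ENNReal.ofReal_ne_top
  -- atomlessness of the common distribution
  have hatom : ∀ a : ℝ, ν {a} = 0 := by
    intro a
    have key : ∀ s ∈ Set.Iio a, ν {a} ≤ F a - F s := by
      intro s hs
      have hdisj : Disjoint ({a} : Set ℝ) (Set.Iic s) :=
        Set.disjoint_singleton_left.mpr (by simpa using hs)
      have hsub : ({a} : Set ℝ) ∪ Set.Iic s ⊆ Set.Iic a :=
        Set.union_subset (by simp) (Set.Iic_subset_Iic.mpr hs.le)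
      have hunion : ν {a} + ν (Set.Iic s) ≤ ν (Set.Iic a) := by
        rw [← measure_union hdisj measurableSet_Iic]
        exact measure_mono hsub
      rw [hIic, hIic] at hunion
      exact ENNReal.le_sub_of_add_le_right (hFne s) hunion
    have hforall : ∀ᶠ s in 𝓝[<] a, ν {a} ≤ F a - F s :=
      eventually_mem_nhdsWithin.mono key
    have htends : Tendsto (fun s => F a - F s) (𝓝[<] a) (𝓝 (F a - F a)) :=
      ENNReal.Tendsto.sub tendsto_const_nhds
        ((hFc.tendsto a).mono_left nhdsWithin_le_nhds) (Or.inl (hFne a))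
    rw [tsub_self] at htends
    exact nonpos_iff_eq_zero.mp (ge_of_tendsto htends hforall)
  -- pi measure
  set pm : Measure (Fin N → ℝ) := Measure.pi (fun _ : Fin N => ν) with hpmdef
  have hpm : μ.map X = pm := by
    rw [hpmdef]
    refine (Measure.pi_eq fun s hs => ?_).symm
    rw [Measure.map_apply hXm (MeasurableSet.univ_pi hs)]
    have hpre : X ⁻¹' Set.pi Set.univ s = ⋂ i, T i ⁻¹' s i := by
      ext ω; simp [Set.mem_pi, hXdef]
    have hint := (iIndepFun_iff_measure_inter_preimage_eq_mul.mp hindep)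
      Finset.univ (fun i _ => hs i)
    rw [hpre, show (⋂ i, T i ⁻¹' s i) = ⋂ i ∈ Finset.univ, T i ⁻¹' s i by simp, hint]
    exact Finset.prod_congr rfl fun i _ => by
      rw [← hmap i, Measure.map_apply (hmeas i) (hs i)]
  have hμpm : ∀ S : Set (Fin N → ℝ), MeasurableSet S → μ (X ⁻¹' S) = pm S := by
    intro S hS
    rw [← Measure.map_apply hXm hS, hpm]
  -- the "ties" set
  set D : Set (Fin N → ℝ) := ⋃ (i : Fin N) (j : Fin N) (_ : i ≠ j), {x | x i = x j} with hDdef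
  have hDsub : ∀ {x : Fin N → ℝ} {i j : Fin N}, i ≠ j → x i = x j → x ∈ D := by
    intro x i j hne heq
    rw [hDdef]
    exact Set.mem_iUnion.mpr ⟨i, Set.mem_iUnion.mpr ⟨j, Set.mem_iUnion.mpr ⟨hne, heq⟩⟩⟩
  have hDinj : ∀ {x : Fin N → ℝ}, x ∉ D → Function.Injective x := by
    intro x hx i j hij
    by_contra hne
    exact hx (hDsub hne hij)
  have hDnull : pm D = 0 := by
    rw [hDdef]
    refine measure_iUnion_null fun i => measure_iUnion_null fun j =>
      measure_iUnion_null fun hij => ?_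
    have hSm : MeasurableSet {x : Fin N → ℝ | x i = x j} :=
      (measurable_pi_apply i).stronglyMeasurable.measurableSet_eq_fun
        (measurable_pi_apply j).stronglyMeasurable
    rw [← hμpm _ hSm]
    have hpair : IndepFun (T i) (T j) μ := hindep.indepFun hij
    rw [indepFun_iff_map_prod_eq_prod_map_map (hmeas i).aemeasurable
      (hmeas j).aemeasurable] at hpair
    have hdm : MeasurableSet {p : ℝ × ℝ | p.1 = p.2} :=
      measurable_fst.stronglyMeasurable.measurableSet_eq_fun
        measurable_snd.stronglyMeasurable
    have hpreeq : X ⁻¹' {x : Fin N → ℝ | x i = x j}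
        = (fun ω => (T i ω, T j ω)) ⁻¹' {p : ℝ × ℝ | p.1 = p.2} := rfl
    rw [hpreeq, ← Measure.map_apply ((hmeas i).prodMk (hmeas j)) hdm, hpair,
      hmap i, hmap j, Measure.prod_apply hdm]
    have hfib : ∀ x : ℝ, (Prod.mk x ⁻¹' {p : ℝ × ℝ | p.1 = p.2}) = {x} := by
      intro x; ext y; simp [eq_comm]
    simp only [hfib, hatom]
    exact lintegral_zero
  -- measurability of the main event
  have hOSK : Measurable fun x : Fin N → ℝ => ordStat x K := measurable_ordStat hK1 hK'
  set A : Set (Fin N → ℝ) := {x | TD < x n ∧ ordStat x K < x n} with hAdef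
  have hAm : MeasurableSet A :=
    (measurableSet_lt measurable_const (measurable_pi_apply n)).inter
      (measurableSet_lt hOSK (measurable_pi_apply n))
  have hLHSset : {ω | TD < T n ω ∧ ordStat (fun i => T i ω) K < T n ω} = X ⁻¹' A := rfl
  set I : Finset ℕ := Finset.Icc (K + 1) N with hIdef
  -- decomposition of A over ranks
  have hAsub : A ⊆ ⋃ h ∈ I, Eset N TD h n := by
    rintro x ⟨hTDx, hKx⟩
    obtain ⟨h, h1, hN', hxh⟩ := exists_ordStat_rank x n
    have hhK : K + 1 ≤ h := by
      by_contra hcon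
      push_neg at hcon
      have hle : ordStat x h ≤ ordStat x K := ordStat_mono x h1 (by omega) hK'
      rw [← hxh] at hle
      exact absurd hKx (not_lt.mpr hle)
    exact Set.mem_biUnion (Finset.mem_Icc.mpr ⟨hhK, hN'⟩) ⟨hTDx, hxh⟩
  have hUsubA : (⋃ h ∈ I, Eset N TD h n) ⊆ A ∪ D := by
    intro x hx
    simp only [Set.mem_iUnion, exists_prop] at hx
    obtain ⟨h, hhI, hTDx, hxh⟩ := hx
    by_cases hxD : x ∈ D
    · exact Or.inr hxD
    · left
      obtain ⟨hK1h, hhN⟩ := Finset.mem_Icc.mp hhI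
      refine ⟨hTDx, ?_⟩
      rw [hxh]
      exact ordStat_strict (hDinj hxD) hK1 (by omega) hhN
  have hEdisj : ∀ h₁ h₂ : ℕ, h₁ ∈ I → h₂ ∈ I → h₁ ≠ h₂ →
      Eset N TD h₁ n ∩ Eset N TD h₂ n ⊆ D := by
    intro h₁ h₂ hh₁ hh₂ hne x hx
    obtain ⟨⟨-, hx1⟩, ⟨-, hx2⟩⟩ := hx
    by_contra hxD
    have hinj := hDinj hxD
    obtain ⟨ha1, ha2⟩ := Finset.mem_Icc.mp hh₁
    obtain ⟨hb1, hb2⟩ := Finset.mem_Icc.mp hh₂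
    rcases hne.lt_or_gt with hlt | hlt
    · have := ordStat_strict hinj (by omega : 1 ≤ h₁) hlt hb2
      rw [← hx1, ← hx2] at this
      exact lt_irrefl _ this
    · have := ordStat_strict hinj (by omega : 1 ≤ h₂) hlt ha2
      rw [← hx1, ← hx2] at this
      exact lt_irrefl _ this
  have hImem : ∀ h ∈ I, 1 ≤ h ∧ h ≤ N := by
    intro h hh
    obtain ⟨h1, h2⟩ := Finset.mem_Icc.mp hh
    exact ⟨by omega, h2⟩
  have hpmA : pm A = ∑ h ∈ I, pm (Eset N TD h n) := by
    have hdisj : Set.Pairwise ↑I (Function.onFun (MeasureTheory.AEDisjoint pm) fun h => Eset N TD h n) := by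
      intro h₁ hh₁ h₂ hh₂ hne
      exact measure_mono_null (hEdisj h₁ h₂ hh₁ hh₂ hne) hDnull
    have hsum := measure_biUnion_finset₀ hdisj
      (fun h hh => (measurableSet_Eset TD (hImem h hh).1 (hImem h hh).2 n).nullMeasurableSet)
    refine le_antisymm ?_ ?_
    · rw [← hsum]; exact measure_mono hAsub
    · rw [← hsum]
      calc pm (⋃ h ∈ I, Eset N TD h n) ≤ pm (A ∪ D) := measure_mono hUsubA
        _ ≤ pm A + pm D := measure_union_le _ _
        _ = pm A := by rw [hDnull, add_zero]
  -- exchangeability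
  have hswap : ∀ (h : ℕ), 1 ≤ h → h ≤ N → ∀ m : Fin N, pm (Eset N TD h m) = pm (Eset N TD h n) := by
    intro h h1 hN' m
    by_cases hmn : m = n
    · rw [hmn]
    · set σ : Equiv.Perm (Fin N) := Equiv.swap n m with hσdef
      have hfun : ⇑(MeasurableEquiv.piCongrLeft (fun _ : Fin N => ℝ) σ.symm)
          = fun x : Fin N → ℝ => x ∘ σ := by
        funext x
        funext i
        rw [MeasurableEquiv.coe_piCongrLeft]
        have := Equiv.piCongrLeft_apply_apply (fun _ : Fin N => ℝ) (e := σ.symm) x (σ i)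
        simpa using this
      have hmp : MeasurePreserving (fun x : Fin N → ℝ => x ∘ σ) pm pm := by
        have hmp0 := measurePreserving_piCongrLeft (fun _ : Fin N => ν) σ.symm
        rw [hfun] at hmp0
        exact hmp0
      have hpre : (fun x : Fin N → ℝ => x ∘ σ) ⁻¹' (Eset N TD h m) = Eset N TD h n := by
        ext x
        simp only [Eset, Set.mem_preimage, Set.mem_setOf_eq, Function.comp_apply]
        rw [ordStat_comp_perm x σ h, hσdef, Equiv.swap_apply_right]
      calc pm (Eset N TD h m)
          = pm ((fun x : Fin N → ℝ => x ∘ σ) ⁻¹' (Eset N TD h m)) :=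
            (hmp.measure_preimage (measurableSet_Eset TD h1 hN' m).nullMeasurableSet).symm
        _ = pm (Eset N TD h n) := by rw [hpre]
  -- summing over coordinates
  have hτ : ∀ h : ℕ, 1 ≤ h → h ≤ N →
      (N : ℝ≥0∞) * pm (Eset N TD h n) = pm {x : Fin N → ℝ | TD < ordStat x h} := by
    intro h h1 hN'
    have hunion : (⋃ m ∈ (Finset.univ : Finset (Fin N)), Eset N TD h m)
        = {x : Fin N → ℝ | TD < ordStat x h} := by
      ext x
      simp only [Set.mem_iUnion, Finset.mem_univ, Set.mem_setOf_eq, exists_prop, true_and,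
        Eset, exists_true_left]
      constructor
      · rintro ⟨m, hTDm, him⟩
        rw [← him]; exact hTDm
      · intro hTD'
        obtain ⟨i, hi⟩ := ordStat_mem_range x h1 hN'
        exact ⟨i, by rw [← hi]; exact hTD', hi.symm⟩
    have hdisj : Set.Pairwise ↑(Finset.univ : Finset (Fin N))
        (Function.onFun (MeasureTheory.AEDisjoint pm) fun m => Eset N TD h m) := by
      intro m₁ _ m₂ _ hne
      refine measure_mono_null ?_ hDnull
      rintro x ⟨⟨-, hx1⟩, ⟨-, hx2⟩⟩
      exact hDsub hne (hx1.trans hx2.symm)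
    have hsum := measure_biUnion_finset₀ hdisj
      (fun m _ => (measurableSet_Eset TD h1 hN' m).nullMeasurableSet)
    rw [hunion] at hsum
    rw [hsum, Finset.sum_congr rfl (fun m _ => hswap h h1 hN' m), Finset.sum_const,
      Finset.card_univ, Fintype.card_fin, nsmul_eq_mul]
  -- identification of Z with pm-quantities
  have hZ' : ∀ h : ℕ, 1 ≤ h → h ≤ N →
      ENNReal.ofReal (Z h) = pm {x : Fin N → ℝ | TD < ordStat x h} := by
    intro h h1 hN'
    have hOSm : MeasurableSet {x : Fin N → ℝ | TD < ordStat x h} :=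
      measurableSet_lt measurable_const (measurable_ordStat h1 hN')
    have hxeq : {ω | TD < ordStat (fun i => T i ω) h}
        = X ⁻¹' {x : Fin N → ℝ | TD < ordStat x h} := rfl
    rw [hZ h, hxeq, hμpm _ hOSm]
    exact ENNReal.ofReal_toReal (measure_ne_top pm _)
  -- final arithmetic
  have hN0 : 0 < N := by omega
  have hNne : (N : ℝ≥0∞) ≠ 0 := Nat.cast_ne_zero.mpr (by omega)
  have hNtop : (N : ℝ≥0∞) ≠ ⊤ := ENNReal.natCast_ne_top N
  rw [hLHSset, hμpm _ hAm, hpmA,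
    ENNReal.ofReal_mul (by positivity : (0 : ℝ) ≤ 1 / (N : ℝ)),
    ENNReal.ofReal_sum_of_nonneg (fun h _ => hZ h ▸ ENNReal.toReal_nonneg)]
  have hofN : ENNReal.ofReal (1 / (N : ℝ)) = ((N : ℝ≥0∞))⁻¹ := by
    rw [one_div, ENNReal.ofReal_inv_of_pos (by exact_mod_cast hN0), ENNReal.ofReal_natCast]
  rw [hofN, Finset.mul_sum]
  refine Finset.sum_congr rfl fun h hh => ?_
  obtain ⟨hh1, hh2⟩ := hImem h hh
  rw [hZ' h hh1 hh2, ← hτ h hh1 hh2, ← mul_assoc, ENNReal.inv_mul_cancel hNne hNtop, one_mul]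
end

section
/- Let T₁,...,T_N be i.i.d. shifted exponential (rate λ, shift c), T_N(K) the K-th order statistic, T_D > c, and n a fixed index. Then P(T_D < min{T_N(K), T_n}) = ((N-K)/N)·Z_K + (1/N)·Σ_{h=1}^{K} Z_h, where Z_h := P(T_D < T_N(h)). -/
open MeasureTheory ProbabilityTheory Real Finset Filter

lemma aux_monotone_count {N : ℕ} (g : Fin N → ℝ) (hg : Monotone g) (t : ℝ) (k : ℕ) (hk : k < N) :
    t < g ⟨k, hk⟩ ↔ (Finset.univ.filter fun j => g j ≤ t).card ≤ k := by
  constructor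
  · intro ht
    have himg : ((Finset.univ.filter fun j => g j ≤ t).image Fin.val) ⊆ Finset.range k := by
      intro m hm
      simp only [Finset.mem_image, Finset.mem_filter, Finset.mem_univ, true_and] at hm
      obtain ⟨j, hj, rfl⟩ := hm
      rw [Finset.mem_range]
      by_contra hkk
      push_neg at hkk
      have : g ⟨k, hk⟩ ≤ g j := hg (by exact hkk)
      linarith
    calc (Finset.univ.filter fun j => g j ≤ t).card
        = ((Finset.univ.filter fun j => g j ≤ t).image Fin.val).card :=
          (Finset.card_image_of_injective _ Fin.val_injective).symm
      _ ≤ (Finset.range k).card := Finset.card_le_card himg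
      _ = k := Finset.card_range k
  · intro hcard
    by_contra ht
    push_neg at ht
    have hsub : Finset.range (k+1) ⊆ ((Finset.univ.filter fun j => g j ≤ t).image Fin.val) := by
      intro m hm
      rw [Finset.mem_range, Nat.lt_succ_iff] at hm
      have hmN : m < N := lt_of_le_of_lt hm hk
      refine Finset.mem_image.2 ⟨⟨m, hmN⟩, ?_, rfl⟩
      simp only [Finset.mem_filter, Finset.mem_univ, true_and]
      exact le_trans (hg (by exact hm)) ht
    have := Finset.card_le_card hsub
    rw [Finset.card_range, Finset.card_image_of_injective _ Fin.val_injective] at this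
    omega

lemma aux_card_perm {N : ℕ} (σ : Equiv.Perm (Fin N)) (p : Fin N → Prop) [DecidablePred p] :
    (Finset.univ.filter fun j => p (σ j)).card = (Finset.univ.filter p).card := by
  apply Finset.card_bij (fun j _ => σ j)
  · intro a ha
    simp only [Finset.mem_filter, Finset.mem_univ, true_and] at ha ⊢
    exact ha
  · intro a _ b _ hab
    exact σ.injective hab
  · intro b hb
    refine ⟨σ.symm b, ?_, by simp⟩
    simp only [Finset.mem_filter, Finset.mem_univ, true_and, Equiv.apply_symm_apply] at hb ⊢
    exact hb

lemma aux_ordStat {N : ℕ} (f : Fin N → ℝ) (t : ℝ) (h : ℕ) (h1 : 1 ≤ h) (hN : h ≤ N) :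
    (t < ordStat f h ↔ (Finset.univ.filter fun i => f i ≤ t).card ≤ h - 1) := by
  have hk : h - 1 < N := by omega
  rw [ordStat, dif_pos hk]
  have := aux_monotone_count (f ∘ Tuple.sort f) (Tuple.monotone_sort f) t (h-1) hk
  simp only [Function.comp_apply] at this
  rw [this, aux_card_perm (Tuple.sort f) (fun i => f i ≤ t)]

lemma aux_dsum (b : ℕ → ℝ) (K : ℕ) :
    ∑ h ∈ Finset.Icc 1 K, ∑ j ∈ Finset.range h, b j
      = ∑ j ∈ Finset.range K, ((K - j : ℕ) : ℝ) * b j := by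
  induction K with
  | zero => simp
  | succ K ih =>
    rw [Finset.sum_Icc_succ_top (by omega), ih]
    have h1 : ∑ j ∈ Finset.range (K+1), ((K + 1 - j : ℕ) : ℝ) * b j
        = ∑ j ∈ Finset.range (K+1), (((K - j : ℕ) : ℝ) * b j + b j) := by
      apply Finset.sum_congr rfl
      intro j hj
      rw [Finset.mem_range, Nat.lt_succ_iff] at hj
      have : K + 1 - j = (K - j) + 1 := by omega
      rw [this]
      push_cast
      ring
    rw [h1, Finset.sum_add_distrib, Finset.sum_range_succ (fun j => ((K - j : ℕ) : ℝ) * b j)]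
    simp

lemma aux_choose (N j : ℕ) (hj : j < N) : (N - j) * N.choose j = N * (N-1).choose j := by
  obtain ⟨m, rfl⟩ : ∃ m, N = m + 1 := ⟨N-1, by omega⟩
  simp only [Nat.add_sub_cancel]
  have h1 := Nat.add_one_mul_choose_eq m j
  rw [Nat.choose_succ_right_eq] at h1
  rw [mul_comm]
  omega

lemma aux_sum_powerset_filter_card {α : Type*} [DecidableEq α] (s : Finset α) (m : ℕ) (f : ℕ → ℝ) :
    ∑ S ∈ s.powerset.filter (fun S => S.card ≤ m), f S.card
      = ∑ j ∈ Finset.range (m+1), (s.card.choose j : ℝ) * f j := by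
  rw [← Finset.sum_fiberwise_of_maps_to (g := Finset.card) (t := Finset.range (m+1))
    (fun S hS => by rw [Finset.mem_filter] at hS; rw [Finset.mem_range]; omega)]
  apply Finset.sum_congr rfl
  intro j hj
  rw [Finset.mem_range] at hj
  have : (s.powerset.filter (fun S => S.card ≤ m)).filter (fun S => S.card = j)
      = s.powersetCard j := by
    ext S
    simp only [Finset.mem_filter, Finset.mem_powerset, Finset.mem_powersetCard]
    constructor
    · rintro ⟨⟨h1, h2⟩, h3⟩; exact ⟨h1, h3⟩
    · rintro ⟨h1, h2⟩; exact ⟨⟨h1, by omega⟩, h2⟩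
  rw [this]
  calc ∑ S ∈ s.powersetCard j, f S.card = ∑ _S ∈ s.powersetCard j, f j := by
        refine Finset.sum_congr rfl fun S hS => ?_
        rw [(Finset.mem_powersetCard.1 hS).2]
    _ = (s.powersetCard j).card • f j := Finset.sum_const _
    _ = _ := by rw [Finset.card_powersetCard, nsmul_eq_mul]

theorem prob_deadline_before_min {Ω : Type*} [MeasurableSpace Ω] (μ : Measure Ω)
    [IsProbabilityMeasure μ]
    (N K : ℕ) (hK1 : 1 ≤ K) (hKN : K ≤ N)
    (lam c TD : ℝ) (hlam : 0 < lam) (hc : 0 < c) (hTD : c < TD)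
    (T : Fin N → Ω → ℝ)
    (hCDF : ∀ i : Fin N, ∀ t : ℝ,
      μ {ω | T i ω ≤ t} = ENNReal.ofReal (if t < c then 0 else 1 - Real.exp (-lam * (t - c))))
    (hmeas : ∀ i, Measurable (T i))
    (hindep : iIndepFun T μ)
    (n : Fin N)
    (Z : ℕ → ℝ) (hZ : ∀ h : ℕ, Z h = (μ {ω | TD < ordStat (fun i => T i ω) h}).toReal) :
    μ {ω | TD < min (ordStat (fun i => T i ω) K) (T n ω)} =
      ENNReal.ofReal ((((N : ℝ) - K) / N) * Z K + (1 / (N : ℝ)) * ∑ h ∈ Finset.Icc 1 K, Z h) := by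
  classical
  set p : ℝ := 1 - Real.exp (-lam * (TD - c)) with hp_def
  set q : ℝ := Real.exp (-lam * (TD - c)) with hq_def
  have hq0 : 0 ≤ q := le_of_lt (Real.exp_pos _)
  have hq1 : q ≤ 1 := Real.exp_le_one_iff.mpr (by nlinarith)
  have hp0 : 0 ≤ p := by simp only [hp_def]; linarith
  -- single-variable probabilities
  have hle : ∀ i, μ {ω | T i ω ≤ TD} = ENNReal.ofReal p := by
    intro i
    rw [hCDF i TD, if_neg (not_lt.2 (le_of_lt hTD))]
  have hgt : ∀ i, μ {ω | TD < T i ω} = ENNReal.ofReal q := by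
    intro i
    have hset : {ω | TD < T i ω} = {ω | T i ω ≤ TD}ᶜ := by
      ext ω; simp [not_le]
    have hms : MeasurableSet {ω | T i ω ≤ TD} := (hmeas i) measurableSet_Iic
    rw [hset, prob_compl_eq_one_sub hms, hle i]
    rw [← ENNReal.ofReal_one, ← ENNReal.ofReal_sub _ hp0]
    congr 1
    simp only [hp_def]; ring
  -- atoms
  set Atom : Finset (Fin N) → Set Ω :=
    fun S => ⋂ i, (if i ∈ S then {ω | T i ω ≤ TD} else {ω | TD < T i ω}) with hAtom_def
  have hmemAtom : ∀ (S : Finset (Fin N)) (ω : Ω),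
      ω ∈ Atom S ↔ (Finset.univ.filter fun i => T i ω ≤ TD) = S := by
    intro S ω
    simp only [hAtom_def, Set.mem_iInter]
    constructor
    · intro hω
      ext i
      simp only [Finset.mem_filter, Finset.mem_univ, true_and]
      constructor
      · intro hle2
        by_contra hiS
        have := hω i
        rw [if_neg hiS] at this
        exact absurd hle2 (not_le.2 this)
      · intro hiS
        have := hω i
        rwa [if_pos hiS] at this
    · intro hfil i
      by_cases hiS : i ∈ S
      · rw [if_pos hiS]
        have : i ∈ Finset.univ.filter (fun i => T i ω ≤ TD) := by rw [hfil]; exact hiS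
        simpa using this
      · rw [if_neg hiS]
        simp only [Set.mem_setOf_eq]
        by_contra hnot
        push_neg at hnot
        have : i ∈ Finset.univ.filter (fun i => T i ω ≤ TD) := by
          simp only [Finset.mem_filter, Finset.mem_univ, true_and]; exact hnot
        rw [hfil] at this
        exact hiS this
  have hAtomMS : ∀ S : Finset (Fin N), MeasurableSet (Atom S) := by
    intro S
    apply MeasurableSet.iInter
    intro i
    split
    · exact (hmeas i) measurableSet_Iic
    · exact (hmeas i) measurableSet_Ioi
  have hAtomMeas : ∀ S : Finset (Fin N),
      μ (Atom S) = ENNReal.ofReal (p ^ S.card * q ^ (N - S.card)) := by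
    intro S
    have hind := hindep.meas_iInter
      (s := fun i => if i ∈ S then {ω | T i ω ≤ TD} else {ω | TD < T i ω}) (fun i => ?_)
    · rw [hAtom_def]
      rw [hind]
      have hfac : ∀ i : Fin N,
          μ (if i ∈ S then {ω | T i ω ≤ TD} else {ω | TD < T i ω})
            = if i ∈ S then ENNReal.ofReal p else ENNReal.ofReal q := by
        intro i; split
        · exact hle i
        · exact hgt i
      rw [Finset.prod_congr rfl (fun i _ => hfac i)]
      rw [Finset.prod_ite (fun _ => ENNReal.ofReal p) (fun _ => ENNReal.ofReal q),
        Finset.prod_const, Finset.prod_const]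
      have h1 : (Finset.univ.filter (fun i => i ∈ S)).card = S.card := by
        congr 1; ext i; simp
      have h2 : (Finset.univ.filter (fun i => ¬ i ∈ S)).card = N - S.card := by
        rw [Finset.filter_not, Finset.card_sdiff_of_subset (Finset.filter_subset _ _), h1]
        congr 1
        simp [Finset.card_univ]
      rw [h1, h2, ENNReal.ofReal_mul (by positivity), ENNReal.ofReal_pow hp0,
        ENNReal.ofReal_pow hq0]
    · by_cases hiS : i ∈ S
      · simp only [if_pos hiS]
        exact ⟨Set.Iic TD, measurableSet_Iic, rfl⟩
      · simp only [if_neg hiS]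
        exact ⟨Set.Ioi TD, measurableSet_Ioi, rfl⟩
  -- pairwise disjointness of atoms
  have hdisj : ∀ (F : Finset (Finset (Fin N))), (↑F : Set (Finset (Fin N))).PairwiseDisjoint Atom := by
    intro F S hS S' hS' hne
    rw [Function.onFun, Set.disjoint_left]
    intro ω hω hω'
    rw [hmemAtom] at hω hω'
    exact hne (hω.symm.trans hω')
  have hUnion : ∀ (F : Finset (Finset (Fin N))),
      μ (⋃ S ∈ F, Atom S) = ENNReal.ofReal (∑ S ∈ F, p ^ S.card * q ^ (N - S.card)) := by
    intro F
    rw [measure_biUnion_finset (hdisj F) (fun S _ => hAtomMS S)]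
    rw [Finset.sum_congr rfl (fun S _ => hAtomMeas S)]
    rw [← ENNReal.ofReal_sum_of_nonneg (fun S _ => by positivity)]
  have hCardEv : ∀ m : ℕ, {ω | (Finset.univ.filter fun i => T i ω ≤ TD).card ≤ m}
      = ⋃ S ∈ (Finset.univ.filter fun S : Finset (Fin N) => S.card ≤ m), Atom S := by
    intro m
    ext ω
    simp only [Set.mem_setOf_eq, Set.mem_iUnion, exists_prop, Finset.mem_filter,
      Finset.mem_univ, true_and]
    constructor
    · intro hω
      exact ⟨_, hω, (hmemAtom _ ω).2 rfl⟩
    · rintro ⟨S, hScard, hωS⟩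
      rw [hmemAtom] at hωS
      rw [hωS]; exact hScard
  have hZval : ∀ h : ℕ, 1 ≤ h → h ≤ N →
      Z h = ∑ j ∈ Finset.range h, (N.choose j : ℝ) * (p ^ j * q ^ (N - j)) := by
    intro h h1 hhN
    have hev : {ω | TD < ordStat (fun i => T i ω) h}
        = {ω | (Finset.univ.filter fun i => T i ω ≤ TD).card ≤ h - 1} := by
      ext ω
      exact aux_ordStat (fun i => T i ω) TD h h1 hhN
    rw [hZ h, hev, hCardEv, hUnion,
      ENNReal.toReal_ofReal (Finset.sum_nonneg (fun S _ => by positivity))]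
    have hfin : (Finset.univ.filter fun S : Finset (Fin N) => S.card ≤ h - 1)
        = (Finset.univ : Finset (Fin N)).powerset.filter (fun S => S.card ≤ h - 1) := by
      rw [Finset.powerset_univ]
    rw [hfin]
    have haux := aux_sum_powerset_filter_card (Finset.univ : Finset (Fin N)) (h - 1)
      (fun j => p ^ j * q ^ (N - j))
    rw [haux, Finset.card_univ, Fintype.card_fin, show h - 1 + 1 = h from by omega]
  have hBev : {ω | TD < min (ordStat (fun i => T i ω) K) (T n ω)}
      = ⋃ S ∈ (Finset.univ.filter fun S : Finset (Fin N) => n ∉ S ∧ S.card ≤ K - 1), Atom S := by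
    ext ω
    simp only [Set.mem_setOf_eq, lt_min_iff, Set.mem_iUnion, exists_prop, Finset.mem_filter,
      Finset.mem_univ, true_and]
    constructor
    · rintro ⟨h1, h2⟩
      refine ⟨Finset.univ.filter fun i => T i ω ≤ TD, ⟨?_, ?_⟩, (hmemAtom _ ω).2 rfl⟩
      · simp only [Finset.mem_filter, Finset.mem_univ, true_and]
        exact not_le.2 h2
      · exact (aux_ordStat (fun i => T i ω) TD K hK1 hKN).1 h1
    · rintro ⟨S, ⟨hnS, hcard⟩, hωS⟩
      rw [hmemAtom] at hωS
      constructor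
      · exact (aux_ordStat (fun i => T i ω) TD K hK1 hKN).2 (by rw [hωS]; exact hcard)
      · by_contra hcon
        push_neg at hcon
        apply hnS
        rw [← hωS]
        simp only [Finset.mem_filter, Finset.mem_univ, true_and]
        exact hcon
  have hBfin : (Finset.univ.filter fun S : Finset (Fin N) => n ∉ S ∧ S.card ≤ K - 1)
      = ((Finset.univ : Finset (Fin N)).erase n).powerset.filter (fun S => S.card ≤ K - 1) := by
    ext S
    simp only [Finset.mem_filter, Finset.mem_univ, true_and, Finset.mem_powerset,
      Finset.subset_erase]
    have : S ⊆ Finset.univ := Finset.subset_univ S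
    tauto
  rw [hBev, hUnion]
  congr 1
  rw [hBfin]
  have haux := aux_sum_powerset_filter_card ((Finset.univ : Finset (Fin N)).erase n) (K - 1)
    (fun j => p ^ j * q ^ (N - j))
  rw [haux, Finset.card_erase_of_mem (Finset.mem_univ n), Finset.card_univ, Fintype.card_fin,
    show K - 1 + 1 = K from by omega]
  rw [hZval K hK1 hKN]
  rw [Finset.sum_congr rfl (fun h hh => hZval h (Finset.mem_Icc.1 hh).1
    (le_trans (Finset.mem_Icc.1 hh).2 hKN))]
  rw [aux_dsum (fun j => (N.choose j : ℝ) * (p ^ j * q ^ (N - j))) K]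
  rw [Finset.mul_sum, Finset.mul_sum, ← Finset.sum_add_distrib]
  apply Finset.sum_congr rfl
  intro j hj
  rw [Finset.mem_range] at hj
  have hjN : j < N := lt_of_lt_of_le hj hKN
  have hNne : (N : ℝ) ≠ 0 := Nat.cast_ne_zero.2 (by omega)
  have key : (((N : ℝ) - K) + ((K - j : ℕ) : ℝ)) * (N.choose j : ℝ)
      = (N : ℝ) * (((N - 1).choose j : ℝ)) := by
    have h2 : ((N : ℝ) - j) * (N.choose j : ℝ) = (N : ℝ) * (((N - 1).choose j : ℝ)) := by
      rw [← Nat.cast_sub hjN.le]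
      exact_mod_cast aux_choose N j hjN
    rw [Nat.cast_sub hj.le]
    rw [show ((N : ℝ) - K + ((K : ℝ) - j)) = ((N : ℝ) - j) from by ring]
    exact h2
  have step : ((N : ℝ) - K) / N * ((N.choose j : ℝ) * (p ^ j * q ^ (N - j)))
        + 1 / N * (((K - j : ℕ) : ℝ) * ((N.choose j : ℝ) * (p ^ j * q ^ (N - j))))
      = ((((N : ℝ) - K) + ((K - j : ℕ) : ℝ)) * (N.choose j : ℝ)) * (p ^ j * q ^ (N - j)) / N := by
    ring
  rw [step, key]
  field_simp
end

section
/- Let T₁,...,T_N be i.i.d. shifted exponential (rate λ, shift c), T_N(K) the K-th order statistic (1 ≤ K ≤ N), and T_D > c. Then the conditional expectation of T_N(K) given the event {T_N(K) < T_D} equals (1/(1 - Z_K)) · Σ_{j=0}^{K-1} (B_{K,j}/(λ·U_{K,j}²)) · [1 + c·λ·U_{K,j} - (1 + T_D·λ·U_{K,j})·V_{K,j}], where B_{K,j} = K·C(N,K)·C(K-1,j)·(-1)^j, U_{K,j} = N-K+1+j, V_{K,j} = exp(-λ·U_{K,j}·(T_D - c)), and Z_K = Σ_{j=0}^{K-1}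 B_{K,j}·V_{K,j}/U_{K,j}. -/
open MeasureTheory ProbabilityTheory Real Finset Filter

/-- `B_{K,j} = K·C(N,K)·C(K-1,j)·(-1)^j`. -/
noncomputable def Bc (N K j : ℕ) : ℝ := (K : ℝ) * (N.choose K) * ((K - 1).choose j) * (-1) ^ j

/-- `U_{K,j} = N - K + 1 + j`. -/
noncomputable def Uc (N K j : ℕ) : ℝ := (N : ℝ) - (K : ℝ) + 1 + (j : ℝ)

/-- `V_{K,j} = exp(-λ·U_{K,j}·(T_D - c))`. -/
noncomputable def Vc (lam c TD : ℝ) (N K j : ℕ) : ℝ := Real.exp (-lam * Uc N K j * (TD - c))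

/-- `Z_K = Σ_{j<K} B_{K,j}·V_{K,j}/U_{K,j}` (closed form of `P(T_D < T_N(K))`). -/
noncomputable def Zc (lam c TD : ℝ) (N K : ℕ) : ℝ :=
  ∑ j ∈ Finset.range K, Bc N K j * Vc lam c TD N K j / Uc N K j

lemma ordStat_le_iff_s10 {N K : ℕ} (hK1 : 1 ≤ K) (hKN : K ≤ N) (f : Fin N → ℝ) (t : ℝ) :
    ordStat f K ≤ t ↔ K ≤ (univ.filter fun i => f i ≤ t).card := by
  have hlt : K - 1 < N := by omega
  rw [ordStat, dif_pos hlt]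
  set σ := Tuple.sort f with hσ
  have hmono : Monotone (f ∘ σ) := Tuple.monotone_sort f
  have hcard : (univ.filter fun i => f (σ i) ≤ t).card = (univ.filter fun i => f i ≤ t).card := by
    apply Finset.card_equiv σ
    intro i
    simp
  rw [← hcard]
  constructor
  · intro h
    calc K = ((⟨K-1, hlt⟩ : Fin N) : ℕ) + 1 := by simp; omega
    _ = (Finset.Iic (⟨K-1, hlt⟩ : Fin N)).card := (Fin.card_Iic _).symm
    _ ≤ _ := by
        apply Finset.card_le_card
        intro i hi
        simp only [Finset.mem_Iic] at hi
        simp only [Finset.mem_filter, Finset.mem_univ, true_and]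
        exact le_trans (hmono hi) h
  · intro h
    by_contra hnot
    push_neg at hnot
    have hsub : (univ.filter fun i => f (σ i) ≤ t) ⊆ Finset.Iio (⟨K-1, hlt⟩ : Fin N) := by
      intro i hi
      simp only [Finset.mem_filter, Finset.mem_univ, true_and] at hi
      simp only [Finset.mem_Iio]
      by_contra hge
      push_neg at hge
      exact absurd hi (not_le.mpr (lt_of_lt_of_le hnot (hmono hge)))
    have := Finset.card_le_card hsub
    rw [Fin.card_Iio] at this
    simp at this
    omega

lemma meas_count_ge {Ω : Type*} [MeasurableSpace Ω] (μ : Measure Ω) [IsProbabilityMeasure μ]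
    {N : ℕ} (T : Fin N → Ω → ℝ) (hmeas : ∀ i, Measurable (T i))
    (hindep : iIndepFun T μ) (t : ℝ) (p : ℝ) (hp0 : 0 ≤ p) (hp1 : p ≤ 1)
    (hCDF : ∀ i, μ {ω | T i ω ≤ t} = ENNReal.ofReal p) (K : ℕ) :
    μ {ω | K ≤ (univ.filter fun i => T i ω ≤ t).card} =
      ENNReal.ofReal (∑ m ∈ Finset.Icc K N, (N.choose m : ℝ) * p ^ m * (1 - p) ^ (N - m)) := by
  classical
  set E : Finset (Fin N) → Set Ω := fun S => {ω | univ.filter (fun i => T i ω ≤ t) = S} with hE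
  have hEeq : ∀ S, E S = ⋂ i ∈ (univ : Finset (Fin N)),
      T i ⁻¹' (if i ∈ S then Set.Iic t else Set.Ioi t) := by
    intro S
    ext ω
    simp only [hE, Set.mem_setOf_eq, Set.mem_iInter, Set.mem_preimage, Finset.mem_univ,
      forall_true_left, true_implies]
    constructor
    · intro h i
      by_cases hi : i ∈ S
      · simp only [hi, if_true, Set.mem_Iic]
        have := hi
        rw [← h] at this
        simpa using this
      · simp only [hi, if_false, Set.mem_Ioi]
        have : i ∉ univ.filter (fun i => T i ω ≤ t) := h ▸ hi
        simp only [Finset.mem_filter, Finset.mem_univ, true_and, not_le] at this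
        exact this
    · intro h
      ext i
      have := h i
      by_cases hi : i ∈ S
      · simp only [hi, if_true, Set.mem_Iic] at this
        simp [hi, this]
      · simp only [hi, if_false, Set.mem_Ioi] at this
        simp [hi, not_le.mpr this]
  have hmu_compl : ∀ i : Fin N, μ (T i ⁻¹' Set.Ioi t) = ENNReal.ofReal (1 - p) := by
    intro i
    have : T i ⁻¹' Set.Ioi t = {ω | T i ω ≤ t}ᶜ := by
      ext ω; simp [not_le]
    rw [this, measure_compl (by exact (hmeas i) measurableSet_Iic) (measure_ne_top μ _), hCDF i]
    rw [measure_univ, ENNReal.ofReal_sub 1 hp0]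
    simp
  have hmuE : ∀ S : Finset (Fin N), μ (E S) =
      ENNReal.ofReal (p ^ S.card * (1 - p) ^ (N - S.card)) := by
    intro S
    rw [hEeq S]
    rw [hindep.measure_inter_preimage_eq_mul (univ : Finset (Fin N))
      (sets := fun i => (if i ∈ S then Set.Iic t else Set.Ioi t))
      (fun i _ => by by_cases hi : i ∈ S <;> simp only [hi, if_true, if_false] <;> measurability)]
    have hterm : ∀ i : Fin N, μ (T i ⁻¹' (if i ∈ S then Set.Iic t else Set.Ioi t)) =
        if i ∈ S then ENNReal.ofReal p else ENNReal.ofReal (1 - p) := by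
      intro i
      by_cases hi : i ∈ S
      · simp only [hi, if_true]
        rw [show T i ⁻¹' Set.Iic t = {ω | T i ω ≤ t} from rfl, hCDF i]
      · simp only [hi, if_false]
        exact hmu_compl i
    simp_rw [hterm]
    rw [Finset.prod_ite (f := fun _ => ENNReal.ofReal p) (g := fun _ => ENNReal.ofReal (1 - p))]
    rw [Finset.prod_const, Finset.prod_const]
    have h1 : (univ.filter (fun i => i ∈ S)) = S := by ext i; simp
    have h2 : (univ.filter (fun i => ¬ i ∈ S)).card = N - S.card := by
      rw [Finset.filter_not]
      rw [Finset.card_sdiff_of_subset (by simp [Finset.subset_univ])]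
      congr 1
      · simp
      · rw [h1]
    rw [h1, h2, ENNReal.ofReal_mul (by positivity), ← ENNReal.ofReal_pow hp0,
      ← ENNReal.ofReal_pow (by linarith)]
  have hset : {ω | K ≤ (univ.filter fun i => T i ω ≤ t).card} =
      ⋃ S ∈ (univ : Finset (Fin N)).powerset.filter (fun S => K ≤ S.card), E S := by
    ext ω
    simp only [Set.mem_setOf_eq, Set.mem_iUnion, hE, Finset.mem_filter, Finset.mem_powerset,
      exists_prop]
    constructor
    · intro h
      exact ⟨univ.filter (fun i => T i ω ≤ t), ⟨Finset.subset_univ _, h⟩, rfl⟩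
    · rintro ⟨S, ⟨-, hS⟩, hfilter⟩
      rw [hfilter]; exact hS
  have hEmeas : ∀ S : Finset (Fin N), MeasurableSet (E S) := by
    intro S
    rw [hEeq S]
    refine Finset.measurableSet_biInter _ (fun i _ => ?_)
    by_cases hi : i ∈ S <;> simp only [hi, if_true, if_false]
    · exact (hmeas i) measurableSet_Iic
    · exact (hmeas i) measurableSet_Ioi
  have hdisj : Set.PairwiseDisjoint
      ↑((univ : Finset (Fin N)).powerset.filter (fun S => K ≤ S.card)) E := by
    intro S _ S' _ hne
    rw [Function.onFun, Set.disjoint_left]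
    intro ω hw hw'
    exact hne (hw ▸ hw' ▸ rfl)
  rw [hset, measure_biUnion_finset hdisj (fun S _ => hEmeas S)]
  simp_rw [hmuE]
  rw [← ENNReal.ofReal_sum_of_nonneg (fun S _ => mul_nonneg (pow_nonneg hp0 _) (pow_nonneg (by linarith) _))]
  congr 1
  have hind : (univ : Finset (Fin N)).powerset.filter (fun S => K ≤ S.card) =
      (Finset.Icc K N).biUnion (fun m => Finset.powersetCard m univ) := by
    ext S
    simp only [Finset.mem_filter, Finset.mem_powerset, Finset.mem_biUnion, Finset.mem_Icc,
      Finset.mem_powersetCard]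
    constructor
    · intro ⟨h1, h2⟩
      exact ⟨S.card, ⟨h2, by simpa using Finset.card_le_univ S⟩, h1, rfl⟩
    · rintro ⟨m, ⟨hm1, -⟩, -, rfl⟩
      exact ⟨Finset.subset_univ _, hm1⟩
  rw [hind, Finset.sum_biUnion]
  · refine Finset.sum_congr rfl (fun m hm => ?_)
    have hcongr : ∀ S ∈ Finset.powersetCard m (univ : Finset (Fin N)),
        p ^ S.card * (1 - p) ^ (N - S.card) = p ^ m * (1 - p) ^ (N - m) := fun S hS => by
      rw [(Finset.mem_powersetCard.mp hS).2]
    rw [Finset.sum_congr rfl hcongr, Finset.sum_const, Finset.card_powersetCard, nsmul_eq_mul]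
    simp [mul_assoc, Finset.card_univ]
  · intro a _ b _ hab
    rw [Function.onFun, Finset.disjoint_left]
    intro S hS hS'
    exact hab ((Finset.mem_powersetCard.mp hS).2 ▸ (Finset.mem_powersetCard.mp hS').2 ▸ rfl)

lemma poly_ident {N K : ℕ} (hK1 : 1 ≤ K) (hKN : K ≤ N) (q : ℝ) :
    ∑ m ∈ Finset.range K, (N.choose m : ℝ) * (1 - q) ^ m * q ^ (N - m) =
    ∑ j ∈ Finset.range K, (K : ℝ) * (N.choose K) * ((K - 1).choose j) * (-1) ^ j
      * q ^ (N - K + 1 + j) / ((N - K + 1 + j : ℕ) : ℝ) := by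
  set L : ℝ → ℝ := fun x => ∑ m ∈ Finset.range K, (N.choose m : ℝ) * (1 - x) ^ m * x ^ (N - m)
    with hL
  set R : ℝ → ℝ := fun x => ∑ j ∈ Finset.range K, (K : ℝ) * (N.choose K) * ((K - 1).choose j)
      * (-1) ^ j * x ^ (N - K + 1 + j) / ((N - K + 1 + j : ℕ) : ℝ) with hR
  set d : ℝ → ℝ := fun x => (K : ℝ) * (N.choose K) * (1 - x) ^ (K - 1) * x ^ (N - K) with hd
  have hLd : ∀ x : ℝ, HasDerivAt L (d x) x := by
    intro x
    set f : ℕ → ℝ := fun m => (m : ℝ) * (N.choose m) * (1 - x) ^ (m - 1) * x ^ (N - m) with hf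
    have hterm : ∀ m ∈ Finset.range K, HasDerivAt
        (fun y : ℝ => (N.choose m : ℝ) * ((1 - y) ^ m * y ^ (N - m))) (f (m + 1) - f m) x := by
      intro m hm
      rw [Finset.mem_range] at hm
      have h1 : HasDerivAt (fun y : ℝ => (1 - y) ^ m) ((m : ℝ) * (1 - x) ^ (m - 1) * (-1)) x :=
        ((hasDerivAt_id x).const_sub 1).pow m
      have h2 := hasDerivAt_pow (N - m) x
      have h3 := (h1.mul h2).const_mul ((N.choose m : ℝ))
      refine h3.congr_deriv (Eq.symm ?_)
      have hchoose : ((m : ℝ) + 1) * (N.choose (m + 1) : ℝ)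
          = (N.choose m : ℝ) * ((N - m : ℕ) : ℝ) := by
        rw [show ((m : ℝ) + 1) = ((m + 1 : ℕ) : ℝ) from by push_cast; ring,
          ← Nat.cast_mul, ← Nat.cast_mul]
        congr 1
        rw [mul_comm, Nat.choose_succ_right_eq]
      simp only [hf, Nat.add_sub_cancel, Nat.cast_add, Nat.cast_one]
      rw [show N - (m + 1) = N - m - 1 from by omega]
      linear_combination ((1 - x) ^ m * x ^ (N - m - 1)) * hchoose
    have hsum := HasDerivAt.fun_sum hterm
    rw [Finset.sum_range_sub f] at hsum
    have hf0 : f 0 = 0 := by simp [hf]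
    have hfK : f K = d x := by simp [hf, hd]
    rw [hf0, hfK, sub_zero] at hsum
    have hfun : L = fun y : ℝ =>
        ∑ m ∈ Finset.range K, (N.choose m : ℝ) * ((1 - y) ^ m * y ^ (N - m)) := by
      funext y
      exact Finset.sum_congr rfl fun i _ => (mul_assoc _ _ _)
    rw [hfun]
    exact hsum
  have hRd : ∀ x : ℝ, HasDerivAt R (d x) x := by
    intro x
    have hterm : ∀ j ∈ Finset.range K, HasDerivAt
        (fun y : ℝ => (K : ℝ) * (N.choose K) * ((K - 1).choose j) * (-1) ^ j * y ^ (N - K + 1 + j)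
          / ((N - K + 1 + j : ℕ) : ℝ))
        ((K : ℝ) * (N.choose K) * (((K - 1).choose j : ℝ) * (-x) ^ j * x ^ (N - K))) x := by
      intro j hj
      have h2 := hasDerivAt_pow (N - K + 1 + j) x
      have h3 := (h2.const_mul ((K : ℝ) * (N.choose K) * ((K - 1).choose j) * (-1) ^ j)).div_const
        ((N - K + 1 + j : ℕ) : ℝ)
      refine h3.congr_deriv (Eq.symm ?_)
      have hne : ((N - K + 1 + j : ℕ) : ℝ) ≠ 0 := Nat.cast_ne_zero.mpr (by omega)
      rw [show N - K + 1 + j - 1 = N - K + j from by omega]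
      rw [neg_pow, show x ^ (N - K + j) = x ^ (N - K) * x ^ j from (pow_add x (N - K) j)]
      rw [eq_div_iff hne]
      ring
    have hsum := HasDerivAt.fun_sum hterm
    have hbin : ∑ j ∈ Finset.range K,
        (K : ℝ) * (N.choose K) * (((K - 1).choose j : ℝ) * (-x) ^ j * x ^ (N - K)) = d x := by
      rw [← Finset.mul_sum, ← Finset.sum_mul]
      have h := add_pow (-x) (1 : ℝ) (K - 1)
      rw [show K - 1 + 1 = K from by omega] at h
      simp only [one_pow, mul_one] at h
      have hs : (∑ i ∈ Finset.range K, (((K - 1).choose i : ℕ) : ℝ) * (-x) ^ i)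
          = (1 - x) ^ (K - 1) := by
        rw [show (1 : ℝ) - x = -x + 1 from by ring, h]
        exact Finset.sum_congr rfl fun i _ => by ring
      rw [hs]
      simp only [hd]
      ring
    rw [hbin] at hsum
    exact hsum
  have hdiff : Differentiable ℝ (fun x => L x - R x) :=
    fun x => ((hLd x).sub (hRd x)).differentiableAt
  have hderiv0 : ∀ x, deriv (fun y => L y - R y) x = 0 := fun x => by
    rw [((hLd x).fun_sub (hRd x)).deriv]; ring
  have hconst := is_const_of_deriv_eq_zero hdiff hderiv0 q 0
  have hL0 : L 0 = 0 := by
    rw [hL]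
    refine Finset.sum_eq_zero (fun m hm => ?_)
    rw [Finset.mem_range] at hm
    rw [zero_pow (by omega : N - m ≠ 0)]
    ring
  have hR0 : R 0 = 0 := by
    rw [hR]
    refine Finset.sum_eq_zero (fun j hj => ?_)
    rw [zero_pow (by omega : N - K + 1 + j ≠ 0)]
    ring
  have : L q = R q := by
    have := hconst
    linarith [hconst, hL0, hR0]
  exact this

theorem condExp_orderStat_given_before_deadline {Ω : Type*} [MeasurableSpace Ω] (μ : Measure Ω)
    [IsProbabilityMeasure μ]
    (N K : ℕ) (hK1 : 1 ≤ K) (hKN : K ≤ N)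
    (lam c TD : ℝ) (hlam : 0 < lam) (hc : 0 < c) (hTD : c < TD)
    (T : Fin N → Ω → ℝ)
    (hCDF : ∀ i : Fin N, ∀ t : ℝ,
      μ {ω | T i ω ≤ t} = ENNReal.ofReal (if t < c then 0 else 1 - Real.exp (-lam * (t - c))))
    (hmeas : ∀ i, Measurable (T i))
    (hindep : iIndepFun T μ)
    (hpos : 0 < 1 - Zc lam c TD N K) :
    (∫ ω in {ω | ordStat (fun i => T i ω) K < TD}, ordStat (fun i => T i ω) K ∂μ) /
        (μ {ω | ordStat (fun i => T i ω) K < TD}).toReal =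
      (1 / (1 - Zc lam c TD N K)) * ∑ j ∈ Finset.range K,
        (Bc N K j / (lam * (Uc N K j) ^ 2)) *
          (1 + c * lam * Uc N K j - (1 + TD * lam * Uc N K j) * Vc lam c TD N K j) := by
  classical
  have hTD0 : 0 < TD := lt_trans hc hTD
  set X : Ω → ℝ := fun ω => ordStat (fun i => T i ω) K with hXdef
  set Z : ℝ := Zc lam c TD N K with hZdef
  set pr : ℝ → ℝ := fun t => if t < c then 0 else 1 - Real.exp (-lam * (t - c)) with hprdef
  set Zr : ℝ → ℝ := fun t =>
    ∑ j ∈ Finset.range K, Bc N K j * Real.exp (-lam * Uc N K j * (t - c)) / Uc N K j with hZrdef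
  set gr : ℝ → ℝ := fun t => if t < c then 0 else 1 - Zr t with hgrdef
  have hZrTD : Zr TD = Z := by simp only [hZrdef, hZdef, Zc, Vc]
  have hUc : ∀ j : ℕ, Uc N K j = ((N - K + 1 + j : ℕ) : ℝ) := by
    intro j
    rw [Uc]
    push_cast [Nat.cast_sub hKN]
    ring
  have hUpos : ∀ j : ℕ, 0 < Uc N K j := fun j => by
    rw [hUc]
    exact_mod_cast Nat.pos_of_ne_zero (by omega)
  have hmaster : ∀ q : ℝ, ∑ m ∈ Finset.range K, (N.choose m : ℝ) * (1 - q) ^ m * q ^ (N - m)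
      = ∑ j ∈ Finset.range K, Bc N K j * q ^ (N - K + 1 + j) / Uc N K j := by
    intro q
    rw [poly_ident hK1 hKN q]
    exact Finset.sum_congr rfl fun j _ => by rw [Bc, hUc]
  have hone : ∑ j ∈ Finset.range K, Bc N K j / Uc N K j = 1 := by
    have hL1 : ∑ m ∈ Finset.range K, (N.choose m : ℝ) * (1 - 1) ^ m * 1 ^ (N - m) = 1 := by
      rw [Finset.sum_eq_single 0]
      · simp
      · intro b _ hb
        simp [zero_pow hb]
      · intro h
        exact absurd (Finset.mem_range.mpr (by omega)) h
    have h1 := (hmaster 1).symm.trans hL1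
    rw [← h1]
    exact Finset.sum_congr rfl fun j _ => by rw [one_pow, mul_one]
  have hZrc : Zr c = 1 := by
    rw [hZrdef]
    simp only [sub_self, mul_zero, Real.exp_zero, mul_one]
    exact hone
  have hexp_pow : ∀ t : ℝ, ∀ j : ℕ, Real.exp (-lam * Uc N K j * (t - c))
      = (Real.exp (-lam * (t - c))) ^ (N - K + 1 + j) := by
    intro t j
    rw [← Real.exp_nat_mul]
    congr 1
    rw [hUc]
    ring
  have hp0 : ∀ t, 0 ≤ pr t := by
    intro t
    rw [hprdef]
    dsimp only
    split
    · exact le_refl 0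
    · rename_i h
      push_neg at h
      have : Real.exp (-lam * (t - c)) ≤ 1 := by
        rw [Real.exp_le_one_iff]
        nlinarith
      linarith
  have hp1 : ∀ t, pr t ≤ 1 := by
    intro t
    rw [hprdef]
    dsimp only
    split
    · norm_num
    · linarith [Real.exp_pos (-lam * (t - c))]
  have hsetle : ∀ t, {ω | X ω ≤ t} = {ω | K ≤ (univ.filter fun i => T i ω ≤ t).card} := by
    intro t
    ext ω
    exact ordStat_le_iff_s10 hK1 hKN _ t
  have hsum_eq : ∀ t, ∑ m ∈ Finset.Icc K N, (N.choose m : ℝ) * (pr t) ^ m * (1 - pr t) ^ (N - m)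
      = gr t := by
    intro t
    by_cases ht : t < c
    · rw [hgrdef]
      simp only [ht, if_true]
      refine Finset.sum_eq_zero fun m hm => ?_
      rw [Finset.mem_Icc] at hm
      rw [hprdef]
      simp only [ht, if_true]
      rw [zero_pow (by omega : m ≠ 0)]
      ring
    · have hpr : pr t = 1 - Real.exp (-lam * (t - c)) := by rw [hprdef]; simp [ht]
      set q : ℝ := Real.exp (-lam * (t - c)) with hq
      have hIcc : ∑ m ∈ Finset.Icc K N, (N.choose m : ℝ) * (pr t) ^ m * (1 - pr t) ^ (N - m)
          = 1 - ∑ m ∈ Finset.range K, (N.choose m : ℝ) * (1 - q) ^ m * q ^ (N - m) := by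
        have htot : ∑ m ∈ Finset.range (N + 1), (N.choose m : ℝ) * (1 - q) ^ m * q ^ (N - m)
            = 1 := by
          have h := add_pow (1 - q) q N
          rw [show (1 : ℝ) - q + q = 1 from by ring, one_pow] at h
          have h2 : ∑ m ∈ Finset.range (N + 1), (N.choose m : ℝ) * (1 - q) ^ m * q ^ (N - m)
              = ∑ m ∈ Finset.range (N + 1), (1 - q) ^ m * q ^ (N - m) * (N.choose m : ℝ) :=
            Finset.sum_congr rfl fun m _ => by ring
          rw [h2, ← h]
        have hsplit : ∑ m ∈ Finset.range (N + 1), (N.choose m : ℝ) * (1 - q) ^ m * q ^ (N - m)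
            = (∑ m ∈ Finset.range K, (N.choose m : ℝ) * (1 - q) ^ m * q ^ (N - m))
              + ∑ m ∈ Finset.Icc K N, (N.choose m : ℝ) * (1 - q) ^ m * q ^ (N - m) := by
          rw [Finset.range_eq_Ico, ← Finset.Ico_add_one_right_eq_Icc,
            ← Finset.sum_Ico_consecutive _ (Nat.zero_le K) (by omega : K ≤ N + 1), ← Finset.range_eq_Ico]
        have : ∑ m ∈ Finset.Icc K N, (N.choose m : ℝ) * (pr t) ^ m * (1 - pr t) ^ (N - m)
            = ∑ m ∈ Finset.Icc K N, (N.choose m : ℝ) * (1 - q) ^ m * q ^ (N - m) := by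
          refine Finset.sum_congr rfl fun m _ => ?_
          rw [hpr]
          ring_nf
        rw [this]
        linarith [hsplit, htot]
      rw [hIcc, hmaster q, hgrdef]
      simp only [ht, if_false]
      congr 1
      rw [hZrdef]
      dsimp only
      exact Finset.sum_congr rfl fun j _ => by rw [hexp_pow t j]
  have hGt : ∀ t, μ {ω | X ω ≤ t} = ENNReal.ofReal (gr t) := by
    intro t
    rw [hsetle t, meas_count_ge μ T hmeas hindep t (pr t) (hp0 t) (hp1 t)
      (fun i => by rw [hCDF i t]) K, hsum_eq t]
  have hgr0 : ∀ t, 0 ≤ gr t := by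
    intro t
    rw [← hsum_eq t]
    refine Finset.sum_nonneg fun m _ => ?_
    have h0 := hp0 t
    have h1 := hp1 t
    exact mul_nonneg (mul_nonneg (Nat.cast_nonneg _) (pow_nonneg h0 _))
      (pow_nonneg (by linarith) _)
  have hXmeas : Measurable X := by
    apply measurable_of_Iic
    intro t
    have h1 : X ⁻¹' Set.Iic t = {ω | K ≤ (univ.filter fun i => T i ω ≤ t).card} := by
      rw [← hsetle t]; rfl
    rw [h1]
    have h2 : {ω | K ≤ (univ.filter fun i => T i ω ≤ t).card}
        = ⋃ S ∈ (univ : Finset (Fin N)).powerset.filter (fun S => S.card = K),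
            ⋂ i ∈ S, {ω | T i ω ≤ t} := by
      ext ω
      simp only [Set.mem_setOf_eq, Set.mem_iUnion, Set.mem_iInter, Finset.mem_filter,
        Finset.mem_powerset, exists_prop]
      constructor
      · intro h
        obtain ⟨S, hS1, hS2⟩ := Finset.exists_subset_card_eq h
        exact ⟨S, ⟨hS1.trans (Finset.subset_univ _), hS2⟩, fun i hi => by
          have := hS1 hi
          simp only [Finset.mem_filter, Finset.mem_univ, true_and] at this
          exact this⟩
      · rintro ⟨S, ⟨-, hcard⟩, hall⟩
        calc K = S.card := hcard.symm
        _ ≤ _ := Finset.card_le_card fun i hi => by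
            simp only [Finset.mem_filter, Finset.mem_univ, true_and]
            exact hall i hi
    rw [h2]
    exact Finset.measurableSet_biUnion _ fun S _ =>
      Finset.measurableSet_biInter _ fun i _ => (hmeas i) measurableSet_Iic
  have hAmeas : MeasurableSet {ω | X ω < TD} := hXmeas measurableSet_Iio
  have hmuA : μ {ω | X ω < TD} = ENNReal.ofReal (1 - Z) := by
    set tseq : ℕ → ℝ := fun n => TD - (TD - c) / (n + 1) with htseqdef
    have hn1pos : ∀ n : ℕ, (0 : ℝ) < (n : ℝ) + 1 := fun n => by positivity
    have htseq_ge : ∀ n : ℕ, c ≤ tseq n := by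
      intro n
      have h1 : (TD - c) / ((n : ℝ) + 1) ≤ TD - c :=
        div_le_self (by linarith) (by have := Nat.cast_nonneg (α := ℝ) n; linarith)
      simp only [htseqdef]
      linarith
    have htseq_lt : ∀ n : ℕ, tseq n < TD := fun n =>
      sub_lt_self _ (div_pos (by linarith) (hn1pos n))
    have hmono : Monotone (fun n : ℕ => {ω | X ω ≤ tseq n}) := by
      intro a b hab ω h
      have hts : tseq a ≤ tseq b := by
        simp only [htseqdef]
        have : (TD - c) / ((b : ℝ) + 1) ≤ (TD - c) / ((a : ℝ) + 1) :=
          div_le_div_of_nonneg_left (by linarith) (hn1pos a) (by exact_mod_cast by omega)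
        linarith
      exact le_trans h hts
    have hunion : (⋃ n, {ω | X ω ≤ tseq n}) = {ω | X ω < TD} := by
      ext ω
      simp only [Set.mem_iUnion, Set.mem_setOf_eq]
      constructor
      · rintro ⟨n, hn⟩
        exact lt_of_le_of_lt hn (htseq_lt n)
      · intro h
        have hε0 : 0 < TD - X ω := by linarith
        obtain ⟨n, hn⟩ := exists_nat_gt ((TD - c) / (TD - X ω))
        refine ⟨n, ?_⟩
        have hn1 : (TD - c) / (TD - X ω) < (n : ℝ) + 1 := lt_of_lt_of_le hn (by linarith)
        have hlt : (TD - c) / ((n : ℝ) + 1) < TD - X ω := by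
          rw [div_lt_iff₀ (hn1pos n)]
          rw [div_lt_iff₀ hε0] at hn1
          nlinarith
        simp only [htseqdef]
        linarith
    have h1 : Tendsto (fun n => μ {ω | X ω ≤ tseq n}) atTop (nhds (μ {ω | X ω < TD})) := by
      rw [← hunion]
      exact tendsto_measure_iUnion_atTop hmono
    have h2 : Tendsto (fun n => μ {ω | X ω ≤ tseq n}) atTop (nhds (ENNReal.ofReal (1 - Z))) := by
      have hgrn : ∀ n, μ {ω | X ω ≤ tseq n} = ENNReal.ofReal (1 - Zr (tseq n)) := by
        intro n
        rw [hGt (tseq n)]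
        congr 1
        rw [hgrdef]
        simp [not_lt.mpr (htseq_ge n)]
      simp_rw [hgrn]
      have htt : Tendsto tseq atTop (nhds TD) := by
        have hz : Tendsto (fun n : ℕ => (TD - c) / ((n : ℝ) + 1)) atTop (nhds 0) := by
          have := tendsto_one_div_add_atTop_nhds_zero_nat (𝕜 := ℝ)
          have h := this.const_mul (TD - c)
          simpa [div_eq_mul_inv, mul_comm] using h
        have := tendsto_const_nhds (x := TD) (f := atTop (α := ℕ)) |>.sub hz
        simpa only [htseqdef, sub_zero] using this
      have hZcont : Continuous Zr := by
        rw [hZrdef]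
        refine continuous_finset_sum _ fun j _ => ?_
        exact (continuous_const.mul (((continuous_const.mul
          ((continuous_id.sub continuous_const)))).rexp)).div_const _
      have hlim : Tendsto (fun n => 1 - Zr (tseq n)) atTop (nhds (1 - Zr TD)) :=
        tendsto_const_nhds.sub ((hZcont.tendsto TD).comp htt)
      rw [hZrTD] at hlim
      exact (ENNReal.continuous_ofReal.tendsto _).comp hlim
    exact tendsto_nhds_unique h1 h2
  have hTnull : ∀ i : Fin N, μ {ω | T i ω < c} = 0 := by
    intro i
    have hcup : {ω | T i ω < c} = ⋃ n : ℕ, {ω | T i ω ≤ c - 1 / ((n : ℝ) + 1)} := by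
      ext ω
      simp only [Set.mem_setOf_eq, Set.mem_iUnion]
      constructor
      · intro h
        obtain ⟨n, hn⟩ := exists_nat_gt (1 / (c - T i ω))
        refine ⟨n, ?_⟩
        have h0 : 0 < c - T i ω := by linarith
        have hn1 : 1 / (c - T i ω) < (n : ℝ) + 1 := lt_of_lt_of_le hn (by linarith)
        have : 1 / ((n : ℝ) + 1) < c - T i ω := by
          rw [div_lt_iff₀ (by positivity)]
          rw [div_lt_iff₀ h0] at hn1
          nlinarith
        linarith
      · rintro ⟨n, hn⟩
        have : (0 : ℝ) < 1 / ((n : ℝ) + 1) := by positivity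
        linarith
    rw [hcup]
    refine measure_iUnion_null fun n => ?_
    rw [hCDF i (c - 1 / ((n : ℝ) + 1))]
    have hlt : c - 1 / ((n : ℝ) + 1) < c := by
      have : (0 : ℝ) < 1 / ((n : ℝ) + 1) := by positivity
      linarith
    rw [if_pos hlt]
    simp
  have hXc : ∀ᵐ ω ∂μ, c ≤ X ω := by
    have hae : ∀ᵐ ω ∂μ, ∀ i, c ≤ T i ω := by
      rw [ae_all_iff]
      intro i
      rw [ae_iff]
      have : {ω | ¬ c ≤ T i ω} = {ω | T i ω < c} := by
        ext ω
        simp [not_le]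
      rw [this]
      exact hTnull i
    filter_upwards [hae] with ω hω
    show c ≤ ordStat (fun i => T i ω) K
    rw [ordStat, dif_pos (by omega : K - 1 < N)]
    exact hω _
  have hnum : (∫ ω in {ω | X ω < TD}, X ω ∂μ)
      = ∑ j ∈ Finset.range K, (Bc N K j / (lam * (Uc N K j) ^ 2)) *
          (1 + c * lam * Uc N K j - (1 + TD * lam * Uc N K j) * Vc lam c TD N K j) := by
    set A := {ω | X ω < TD} with hAdef
    have hXA_lt : ∀ᵐ ω ∂(μ.restrict A), X ω < TD := by
      filter_upwards [ae_restrict_mem hAmeas] with ω h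
      exact h
    have hXA_ge : ∀ᵐ ω ∂(μ.restrict A), c ≤ X ω := ae_restrict_of_ae hXc
    have hint : Integrable X (μ.restrict A) := by
      refine Integrable.mono' (integrable_const TD) hXmeas.aestronglyMeasurable ?_
      filter_upwards [hXA_lt, hXA_ge] with ω h1 h2
      rw [Real.norm_eq_abs]
      exact abs_le.mpr ⟨by linarith, le_of_lt h1⟩
    have hlayer := hint.integral_eq_integral_meas_lt (by
      filter_upwards [hXA_ge] with ω h
      simpa using le_trans (le_of_lt hc) h)
    set hfun : ℝ → ℝ := fun t => if t < TD then (1 - Z) - gr t else 0 with hhdef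
    have hmeaseq : ∀ t ∈ Set.Ioi (0 : ℝ),
        (μ.restrict A).real {a | t < X a} = hfun t := by
      intro t ht
      have hms : MeasurableSet {a | t < X a} := hXmeas measurableSet_Ioi
      rw [measureReal_def, Measure.restrict_apply hms]
      by_cases htTD : t < TD
      · have hsub : {a | X a ≤ t} ⊆ A := fun a ha => lt_of_le_of_lt ha htTD
        have hinter : {a | t < X a} ∩ A = A \ {a | X a ≤ t} := by
          ext a
          simp only [Set.mem_inter_iff, Set.mem_setOf_eq, Set.mem_diff, hAdef, not_le]
          tauto
        rw [hinter, measure_diff hsub (hXmeas measurableSet_Iic).nullMeasurableSet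
          (measure_ne_top μ _)]
        rw [show μ {a | X a ≤ t} = ENNReal.ofReal (gr t) from hGt t, show μ A
          = ENNReal.ofReal (1 - Z) from hmuA]
        have hle : gr t ≤ 1 - Z := by
          have hmono' : μ {ω | X ω ≤ t} ≤ μ A := measure_mono hsub
          rw [hGt t, hmuA] at hmono'
          exact (ENNReal.ofReal_le_ofReal_iff (by linarith)).mp hmono'
        rw [← ENNReal.ofReal_sub _ (hgr0 t), ENNReal.toReal_ofReal (by linarith)]
        simp only [hhdef, htTD, if_true]
      · have hempty : {a | t < X a} ∩ A = ∅ := by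
          ext a
          simp only [Set.mem_inter_iff, Set.mem_setOf_eq, hAdef, Set.mem_empty_iff_false,
            iff_false, not_and, not_lt]
          intro h1
          linarith [not_lt.mp htTD]
        rw [hempty]
        simp [hhdef, htTD]
    rw [hlayer, setIntegral_congr_fun measurableSet_Ioi hmeaseq]
    -- integrability of hfun on pieces
    have hgr_ind : gr = Set.indicator (Set.Ici c) (fun t => 1 - Zr t) := by
      funext t
      rw [hgrdef]
      by_cases ht : t < c
      · rw [Set.indicator_of_notMem (by simpa using not_le.mpr ht)]
        simp [ht]
      · rw [Set.indicator_of_mem (by simpa using not_lt.mp ht)]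
        simp [ht]
    have hZrcont : Continuous Zr := by
      rw [hZrdef]
      refine continuous_finset_sum _ fun j _ => ?_
      exact (continuous_const.mul (((continuous_const.mul
        ((continuous_id.sub continuous_const)))).rexp)).div_const _
    have hgr_int : IntegrableOn gr (Set.Ioc 0 TD) := by
      rw [hgr_ind]
      exact ((continuous_const.sub hZrcont).integrableOn_Ioc).indicator measurableSet_Ici
    have hfun_int1 : IntegrableOn hfun (Set.Ioc 0 TD) := by
      have hF : IntegrableOn (fun t => (1 - Z) - gr t) (Set.Ioc 0 TD) :=
        (integrableOn_const measure_Ioc_lt_top.ne).sub hgr_int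
      refine hF.congr_fun ?_ measurableSet_Ioc
      intro t ht
      simp only [Set.mem_Ioc] at ht
      by_cases h : t < TD
      · simp [hhdef, h]
      · have ht2 : t = TD := le_antisymm ht.2 (not_lt.mp h)
        have hgrTD : gr TD = 1 - Z := by
          rw [hgrdef]
          simp [not_lt.mpr (le_of_lt hTD), hZrTD]
        simp [hhdef, ht2, hgrTD]
    have hfun_int2 : IntegrableOn hfun (Set.Ioi TD) := by
      refine IntegrableOn.congr_fun (integrableOn_zero) ?_ measurableSet_Ioi
      intro t ht
      simp only [Set.mem_Ioi] at ht
      simp [hhdef, not_lt.mpr (le_of_lt ht)]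
    have hsplitIoi : ∫ t in Set.Ioi (0 : ℝ), hfun t = ∫ t in Set.Ioc 0 TD, hfun t := by
      rw [← Set.Ioc_union_Ioi_eq_Ioi (le_of_lt hTD0),
        setIntegral_union (Set.Ioc_disjoint_Ioi le_rfl) measurableSet_Ioi hfun_int1 hfun_int2]
      have hzero : ∫ t in Set.Ioi TD, hfun t = 0 := by
        have heq : Set.EqOn hfun (fun _ => (0 : ℝ)) (Set.Ioi TD) := by
          intro t ht
          simp only [Set.mem_Ioi] at ht
          simp [hhdef, not_lt.mpr (le_of_lt ht)]
        rw [setIntegral_congr_fun measurableSet_Ioi heq]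
        simp
      rw [hzero, add_zero]
    rw [hsplitIoi, ← intervalIntegral.integral_of_le (le_of_lt hTD0)]
    have hii1 : IntervalIntegrable hfun volume 0 c := by
      rw [intervalIntegrable_iff_integrableOn_Ioc_of_le (le_of_lt hc)]
      exact hfun_int1.mono_set (Set.Ioc_subset_Ioc_right (le_of_lt hTD))
    have hii2 : IntervalIntegrable hfun volume c TD := by
      rw [intervalIntegrable_iff_integrableOn_Ioc_of_le (le_of_lt hTD)]
      exact hfun_int1.mono_set (Set.Ioc_subset_Ioc_left (le_of_lt hc))
    rw [← intervalIntegral.integral_add_adjacent_intervals hii1 hii2]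
    have hI1 : ∫ t in (0 : ℝ)..c, hfun t = c * (1 - Z) := by
      have heq : Set.EqOn hfun (fun _ => (1 - Z)) (Set.uIcc 0 c) := by
        intro t ht
        rw [Set.uIcc_of_le (le_of_lt hc), Set.mem_Icc] at ht
        by_cases htc : t < c
        · simp [hhdef, hgrdef, htc, lt_trans htc hTD]
        · have htc2 : t = c := le_antisymm ht.2 (not_lt.mp htc)
          simp [hhdef, hgrdef, htc2, hTD, lt_irrefl, hZrc]
      rw [intervalIntegral.integral_congr heq, intervalIntegral.integral_const]
      simp [mul_comm]
    set F0 : ℝ → ℝ := fun t => (∑ j ∈ Finset.range K,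
        -(Bc N K j) * Real.exp (-lam * Uc N K j * (t - c)) / (lam * (Uc N K j) ^ 2)) - Z * t
      with hF0def
    have hF0d : ∀ t : ℝ, HasDerivAt F0 (Zr t - Z) t := by
      intro t
      have hsum : ∀ j ∈ Finset.range K, HasDerivAt (fun y =>
          -(Bc N K j) * Real.exp (-lam * Uc N K j * (y - c)) / (lam * (Uc N K j) ^ 2))
          (Bc N K j * Real.exp (-lam * Uc N K j * (t - c)) / Uc N K j) t := by
        intro j _
        have h1 : HasDerivAt (fun y : ℝ => -lam * Uc N K j * (y - c)) (-lam * Uc N K j) t := by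
          simpa using ((hasDerivAt_id t).sub_const c).const_mul (-lam * Uc N K j)
        have h2 := h1.exp
        have h3 := (h2.const_mul (-(Bc N K j))).div_const (lam * (Uc N K j) ^ 2)
        refine h3.congr_deriv (Eq.symm ?_)
        have hU := (hUpos j).ne'
        field_simp
      have hS := HasDerivAt.fun_sum hsum
      have hZt : HasDerivAt (fun y : ℝ => Z * y) Z t := by
        simpa using (hasDerivAt_id t).const_mul Z
      have hcomb := hS.fun_sub hZt
      convert hcomb using 1
    have hI2 : ∫ t in c..TD, hfun t = F0 TD - F0 c := by
      have heq : Set.EqOn hfun (fun t => Zr t - Z) (Set.uIcc c TD) := by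
        intro t ht
        rw [Set.uIcc_of_le (le_of_lt hTD), Set.mem_Icc] at ht
        by_cases htTD : t < TD
        · have : ¬ t < c := not_lt.mpr ht.1
          simp only [hhdef, hgrdef, htTD, if_true, this, if_false]
          ring
        · have ht2 : t = TD := le_antisymm ht.2 (not_lt.mp htTD)
          simp [hhdef, ht2, hZrTD, lt_irrefl]
      rw [intervalIntegral.integral_congr heq]
      exact intervalIntegral.integral_eq_sub_of_hasDerivAt (fun t _ => hF0d t)
        ((hZrcont.sub continuous_const).intervalIntegrable c TD)
    rw [hI1, hI2]
    set S2 : ℝ := ∑ j ∈ Finset.range K, Bc N K j / (lam * (Uc N K j) ^ 2) with hS2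
    set S3 : ℝ := ∑ j ∈ Finset.range K, Bc N K j * Vc lam c TD N K j / (lam * (Uc N K j) ^ 2)
      with hS3
    have hF0TD : F0 TD = -S3 - Z * TD := by
      rw [hF0def]
      dsimp only
      congr 1
      rw [hS3, ← Finset.sum_neg_distrib]
      refine Finset.sum_congr rfl fun j _ => ?_
      rw [Vc]
      ring
    have hF0c : F0 c = -S2 - Z * c := by
      rw [hF0def]
      dsimp only
      congr 1
      rw [hS2, ← Finset.sum_neg_distrib]
      refine Finset.sum_congr rfl fun j _ => ?_
      rw [sub_self, mul_zero, Real.exp_zero]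
      ring
    have hZsum : Z = ∑ j ∈ Finset.range K, Bc N K j * Vc lam c TD N K j / Uc N K j := rfl
    have htarget : ∑ j ∈ Finset.range K, (Bc N K j / (lam * (Uc N K j) ^ 2)) *
        (1 + c * lam * Uc N K j - (1 + TD * lam * Uc N K j) * Vc lam c TD N K j)
        = c - TD * Z + (S2 - S3) := by
      have hper : ∀ j ∈ Finset.range K, (Bc N K j / (lam * (Uc N K j) ^ 2)) *
          (1 + c * lam * Uc N K j - (1 + TD * lam * Uc N K j) * Vc lam c TD N K j)
          = c * (Bc N K j / Uc N K j) - TD * (Bc N K j * Vc lam c TD N K j / Uc N K j)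
            + (Bc N K j / (lam * (Uc N K j) ^ 2)
               - Bc N K j * Vc lam c TD N K j / (lam * (Uc N K j) ^ 2)) := by
        intro j _
        have hU := (hUpos j).ne'
        have hL := hlam.ne'
        field_simp
        ring
      rw [Finset.sum_congr rfl hper, Finset.sum_add_distrib, Finset.sum_sub_distrib,
        Finset.sum_sub_distrib, ← Finset.mul_sum, ← Finset.mul_sum, hone, mul_one, ← hZsum,
        ← hS2, ← hS3]
    rw [htarget, hF0TD, hF0c]
    ring


  rw [show (∫ ω in {ω | ordStat (fun i => T i ω) K < TD}, ordStat (fun i => T i ω) K ∂μ)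
      = (∫ ω in {ω | X ω < TD}, X ω ∂μ) from rfl,
    show μ {ω | ordStat (fun i => T i ω) K < TD} = μ {ω | X ω < TD} from rfl,
    hnum, hmuA, ENNReal.toReal_ofReal (le_of_lt hpos)]
  rw [div_eq_iff (ne_of_gt hpos)]
  field_simp
  exact Finset.sum_congr rfl fun j _ => by ring
end
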